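/- arXiv:1611.08257 — 2 statements merged into one kernel-verified Lean document; each statement's English description precedes it below -/
import Mathlib

section
/- Assume x̄ is a local minimizer of the disjunctive program (P) but not an essential local minimizer of second order. Then there exists a twice continuously differentiable function h = (δf, δF) : ℝ^n → ℝ × ℝ^m with h(x̄) = 0, ∇h(x̄) = 0 and ∇²h(x̄) = 0 such that x̄ is not a local minimizer of the perturbed problem min (f + δf)(x) subject to (F + δF)(x) ∈ Ω. -/
/-!
Failure of second-order essential minimality yields points `x k → x̄` with
`r k = ‖x k - x̄‖`, `r (k + 1) < r k / 2`, and both `f (x k) - f x̄` and `d(F (x k), Ω)` below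
`2⁻ᵏ r k²`. Pick `y k ∈ Ω` within `2⁻ᵏ r k²` of `F (x k)` and place at `x k` a bump of radius
`r k / 2`, of height `-2⁻ᵏ r k²` for `δf` and `y k - F (x k)` for `δF`. These balls are pairwise
disjoint and avoid `x̄`. A bump of radius `ρ` and height at most `ε ρ²` has `i`-th derivative of
size `O(ε ρ^(2-i))`, so for `i ≤ 2` the series of derivatives converge uniformly: the sums are
`C²`, and their derivatives of order `≤ 2` at `x̄` are sums of zeros, every bump vanishing near
`x̄`. Each `x k` is feasible for the perturbed problem and has a smaller perturbed objective than
`x̄`.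
-/

noncomputable section

open Filter Topology Set

/-- Euclidean space `ℝ^n`. -/
abbrev Euc (n : ℕ) : Type := EuclideanSpace ℝ (Fin n)

variable {E : Type*} [NormedAddCommGroup E] [NormedSpace ℝ E]
variable {Y : Type*} [NormedAddCommGroup Y] [NormedSpace ℝ Y]

/-- The contingent (Bouligand/tangent) cone `T(x;Ω)`; empty when `x ∉ Ω`. -/
def tcone (Ω : Set E) (x : E) : Set E :=
  {u | x ∈ Ω ∧ ∃ t : ℕ → ℝ, ∃ w : ℕ → E, (∀ k, 0 < t k) ∧
    Tendsto t atTop (𝓝 0) ∧ Tendsto w atTop (𝓝 u) ∧ ∀ k, x + t k • w k ∈ Ω}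

/-- The Fréchet (regular) normal cone `N̂(x;Ω)`, viewed as a set of continuous
linear functionals; empty when `x ∉ Ω`. -/
def fnc (Ω : Set E) (x : E) : Set (E →L[ℝ] ℝ) :=
  {ξ | x ∈ Ω ∧ ∀ ε : ℝ, 0 < ε → ∃ δ : ℝ, 0 < δ ∧
    ∀ y ∈ Ω, ‖y - x‖ < δ → ξ (y - x) ≤ ε * ‖y - x‖}

/-- The limiting (Mordukhovich) normal cone `N(x;Ω)`; empty when `x ∉ Ω`. -/
def lnc (Ω : Set E) (x : E) : Set (E →L[ℝ] ℝ) :=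
  {ξ | x ∈ Ω ∧ ∃ xk : ℕ → E, ∃ ξk : ℕ → (E →L[ℝ] ℝ),
    Tendsto xk atTop (𝓝 x) ∧ Tendsto ξk atTop (𝓝 ξ) ∧ ∀ k, ξk k ∈ fnc Ω (xk k)}

/-- The directional limiting normal cone `N(x;Ω;u)`; empty when `x ∉ Ω`. -/
def dlnc (Ω : Set E) (x u : E) : Set (E →L[ℝ] ℝ) :=
  {ξ | x ∈ Ω ∧ ∃ t : ℕ → ℝ, ∃ w : ℕ → E, ∃ ξk : ℕ → (E →L[ℝ] ℝ), (∀ k, 0 < t k) ∧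
    Tendsto t atTop (𝓝 0) ∧ Tendsto w atTop (𝓝 u) ∧ Tendsto ξk atTop (𝓝 ξ) ∧
    ∀ k, ξk k ∈ fnc Ω (x + t k • w k)}

/-- A convex polyhedron: a finite intersection of closed halfspaces. -/
def IsPolyhedron (P : Set E) : Prop :=
  ∃ k : ℕ, ∃ a : Fin k → (E →L[ℝ] ℝ), ∃ b : Fin k → ℝ, P = {x | ∀ j, a j x ≤ b j}

/-- A union of finitely many convex polyhedra. -/
def IsFinUnionPolyhedra (Ω : Set E) : Prop :=
  ∃ p : ℕ, ∃ P : Fin p → Set E, (∀ i, IsPolyhedron (P i)) ∧ Ω = ⋃ i, P i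

/-- The constraint multifunction `M(x) = F(x) - Ω`. -/
def cmap (F : E → Y) (Ω : Set Y) : E → Set Y := fun x => {y | F x - y ∈ Ω}

/-- Metric subregularity of `M` at `(x̄,ȳ) ∈ gph M`. -/
def SubregAt (M : E → Set Y) (x' : E) (y' : Y) : Prop :=
  y' ∈ M x' ∧ ∃ κ : ℝ, 0 < κ ∧ ∃ ε : ℝ, 0 < ε ∧ ∀ x : E, dist x x' < ε →
    EMetric.infEdist x {z | y' ∈ M z} ≤ ENNReal.ofReal κ * EMetric.infEdist y' (M x)

/-- The directional neighborhood `V_{ρ,δ}(u)`. -/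
def dirNbhd (u : E) (ρ δ : ℝ) : Set E :=
  {z | ‖z‖ ≤ ρ ∧ ‖‖u‖ • z - ‖z‖ • u‖ ≤ δ * (‖z‖ * ‖u‖)}

/-- Metric subregularity of `M` in direction `u` at `(x̄,ȳ) ∈ gph M`. -/
def SubregDir (M : E → Set Y) (x' : E) (y' : Y) (u : E) : Prop :=
  y' ∈ M x' ∧ ∃ ρ : ℝ, 0 < ρ ∧ ∃ δ : ℝ, 0 < δ ∧ ∃ κ : ℝ, 0 < κ ∧
    ∀ z ∈ dirNbhd u ρ δ,
      EMetric.infEdist (x' + z) {z' | y' ∈ M z'} ≤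
        ENNReal.ofReal κ * EMetric.infEdist y' (M (x' + z))

/-- Mixed metric regularity/subregularity of `M = (M₁,M₂)` at `(x̄,(ȳ₁,ȳ₂))`. -/
def MixedRegSubreg {Y₁ Y₂ : Type*} [NormedAddCommGroup Y₁] [NormedSpace ℝ Y₁]
    [NormedAddCommGroup Y₂] [NormedSpace ℝ Y₂]
    (M₁ : E → Set Y₁) (M₂ : E → Set Y₂) (x' : E) (y₁' : Y₁) (y₂' : Y₂) : Prop :=
  y₁' ∈ M₁ x' ∧ y₂' ∈ M₂ x' ∧ ∃ κ : ℝ, 0 < κ ∧ ∃ ε : ℝ, 0 < ε ∧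
    ∀ x : E, ∀ y₁ : Y₁, dist x x' < ε → dist y₁ y₁' < ε →
      EMetric.infEdist x {z | y₁ ∈ M₁ z ∧ y₂' ∈ M₂ z} ≤
        ENNReal.ofReal κ * EMetric.infEdist (y₁, y₂') (M₁ x ×ˢ M₂ x)


section IteratedFDeriv

variable {𝕜 V W : Type*} [NontriviallyNormedField 𝕜] [NormedAddCommGroup V] [NormedSpace 𝕜 V]
  [NormedAddCommGroup W] [NormedSpace 𝕜 W] {g : V → W} {x : V}

theorem fderiv_eq_zero_of_iteratedFDeriv_one_eq_zero (h : iteratedFDeriv 𝕜 1 g x = 0) :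
    fderiv 𝕜 g x = 0 :=
  norm_eq_zero.1 (by rw [← norm_iteratedFDeriv_one, h, norm_zero])

theorem fderiv_fderiv_eq_zero_of_iteratedFDeriv_two_eq_zero (h : iteratedFDeriv 𝕜 2 g x = 0) :
    fderiv 𝕜 (fderiv 𝕜 g) x = 0 := by
  ext a b
  simpa [iteratedFDeriv_two_apply] using congr($h ![a, b])

end IteratedFDeriv


section ScaledBump

variable {V W : Type*} [NormedAddCommGroup V] [NormedSpace ℝ V] [HasContDiffBump V]
  [NormedAddCommGroup W] [NormedSpace ℝ W]

def scaledBump (θ : ContDiffBump (0 : V)) (c : V) (ρ : ℝ) (v : W) : V → W :=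
  fun x => θ (ρ⁻¹ • (x - c)) • v

variable (θ : ContDiffBump (0 : V)) (c : V) (ρ : ℝ) (v : W)

theorem contDiff_scaledBump {n : ℕ∞} : ContDiff ℝ n (scaledBump θ c ρ v) :=
  (θ.contDiff.comp ((contDiff_id.sub contDiff_const).const_smul ρ⁻¹)).smul contDiff_const

theorem scaledBump_self : scaledBump θ c ρ v c = v := by
  simp [scaledBump, θ.one_of_mem_closedBall (Metric.mem_closedBall_self θ.rIn_pos.le)]

theorem scaledBump_eq_zero {ρ : ℝ} (hρ : 0 < ρ) {x : V} (hx : ρ * θ.rOut ≤ dist x c) :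
    scaledBump θ c ρ v x = 0 := by
  rw [scaledBump, θ.zero_of_le_dist, zero_smul]
  rwa [dist_zero_right, norm_smul, norm_inv, Real.norm_of_nonneg hρ.le, ← dist_eq_norm,
    le_inv_mul_iff₀ hρ]

theorem iteratedFDeriv_scaledBump_eq_zero {ρ : ℝ} (hρ : 0 < ρ) {x : V}
    (hx : ρ * θ.rOut < dist x c) (i : ℕ) : iteratedFDeriv ℝ i (scaledBump θ c ρ v) x = 0 := by
  have hzero : scaledBump θ c ρ v =ᶠ[𝓝 x] 0 := by
    filter_upwards [(isOpen_lt continuous_const (continuous_id.dist continuous_const)).mem_nhds hx]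
      with y hy using scaledBump_eq_zero θ c v hρ hy.le
  rw [(hzero.iteratedFDeriv ℝ i).eq_of_nhds, Pi.zero_def, iteratedFDeriv_fun_zero, Pi.zero_apply]

theorem norm_iteratedFDeriv_scaledBump (i : ℕ) (x : V) :
    ‖iteratedFDeriv ℝ i (scaledBump θ c ρ v) x‖ =
      |ρ⁻¹| ^ i * ‖iteratedFDeriv ℝ i θ (ρ⁻¹ • (x - c))‖ * ‖v‖ := by
  have hscale : iteratedFDeriv ℝ i (fun x => θ (ρ⁻¹ • (x - c))) x =
      (ρ⁻¹) ^ i • iteratedFDeriv ℝ i θ (ρ⁻¹ • (x - c)) := by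
    rw [iteratedFDeriv_comp_sub (f := fun z => θ (ρ⁻¹ • z)),
      iteratedFDeriv_comp_const_smul _ θ.contDiff]
  have hcd : ContDiffAt ℝ i (fun x => θ (ρ⁻¹ • (x - c))) x :=
    (θ.contDiff.comp ((contDiff_id.sub contDiff_const).const_smul ρ⁻¹)).contDiffAt
  unfold scaledBump
  rw [iteratedFDeriv_smul_const_apply hcd, hscale]
  have hcomp : ∀ M : ContinuousMultilinearMap ℝ (fun _ : Fin i => V) ℝ,
      ((ContinuousLinearMap.id ℝ ℝ).smulRight v).compContinuousMultilinearMap M =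
        M.smulRight v := fun M => by ext; rfl
  rw [hcomp, ContinuousMultilinearMap.norm_smulRight, norm_smul, norm_pow, Real.norm_eq_abs]

end ScaledBump

section FlatInterpolation

variable {V W : Type*} [NormedAddCommGroup V] [NormedSpace ℝ V] [HasContDiffBump V]
  [FiniteDimensional ℝ V] [NormedAddCommGroup W] [NormedSpace ℝ W] [CompleteSpace W]

theorem exists_contDiff_flat_interpolation {x₀ : V} {c : ℕ → V} {ρ ε : ℕ → ℝ} {v : ℕ → W}
    (hρ : ∀ k, 0 < ρ k) (hρ₁ : ∀ k, ρ k ≤ 1) (hε : Summable ε)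
    (hv : ∀ k, ‖v k‖ ≤ ε k * ρ k ^ 2) (hsep : Pairwise fun j k => ρ k ≤ dist (c j) (c k))
    (hx₀ : ∀ k, ρ k < dist x₀ (c k)) :
    ∃ g : V → W, ContDiff ℝ 2 g ∧ g x₀ = 0 ∧ fderiv ℝ g x₀ = 0 ∧ fderiv ℝ (fderiv ℝ g) x₀ = 0 ∧
      ∀ k, g (c k) = v k := by
  let θ : ContDiffBump (0 : V) := ⟨1 / 2, 1, by norm_num, by norm_num⟩
  let G k := scaledBump θ (c k) (ρ k) (v k)
  have hθ : ∀ i : ℕ, ∃ C, ∀ y, ‖iteratedFDeriv ℝ i θ y‖ ≤ C := fun i =>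
    ((θ.contDiff (n := ⊤)).continuous_iteratedFDeriv (mod_cast le_top))
      |>.bounded_above_of_compact_support (θ.hasCompactSupport.iteratedFDeriv i)
  choose C hC using hθ
  have hG : ∀ (i : ℕ) k x, (i : ℕ∞) ≤ 2 → ‖iteratedFDeriv ℝ i (G k) x‖ ≤ C i * ε k := by
    intro i k x hi
    have hε₀ : 0 ≤ ε k :=
      nonneg_of_mul_nonneg_left ((norm_nonneg _).trans (hv k)) (pow_pos (hρ k) 2)
    have hC₀ : 0 ≤ C i := (norm_nonneg _).trans (hC i 0)
    have hscale : |(ρ k)⁻¹| ^ i * ρ k ^ 2 ≤ 1 := by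
      have h₀ := hρ k
      have h₁ := hρ₁ k
      have hi' : i ≤ 2 := mod_cast hi
      rw [abs_of_pos (inv_pos.2 h₀)]
      interval_cases i <;> field_simp <;> nlinarith
    rw [norm_iteratedFDeriv_scaledBump]
    calc |(ρ k)⁻¹| ^ i * ‖iteratedFDeriv ℝ i θ ((ρ k)⁻¹ • (x - c k))‖ * ‖v k‖
        ≤ |(ρ k)⁻¹| ^ i * C i * (ε k * ρ k ^ 2) :=
          mul_le_mul (by gcongr; exact hC i _) (hv k) (norm_nonneg _) (by positivity)
      _ = C i * ε k * (|(ρ k)⁻¹| ^ i * ρ k ^ 2) := by ring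
      _ ≤ C i * ε k := mul_le_of_le_one_right (by positivity) hscale
  have hsum : ∀ i : ℕ, (i : ℕ∞) ≤ 2 → Summable fun k => C i * ε k := fun i _ => hε.mul_left _
  have hGsmooth : ∀ k, ContDiff ℝ 2 (G k) := fun k => contDiff_scaledBump _ _ _ _
  have hflat : ∀ i : ℕ, i ≤ 2 → iteratedFDeriv ℝ i (fun x => ∑' k, G k x) x₀ = 0 := by
    intro i hi
    rw [iteratedFDeriv_tsum_apply hGsmooth hsum hG (mod_cast hi)]
    refine (tsum_congr fun k => ?_).trans tsum_zero
    exact iteratedFDeriv_scaledBump_eq_zero θ _ _ (hρ k) (by simpa [θ] using hx₀ k) i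
  refine ⟨fun x => ∑' k, G k x, contDiff_tsum hGsmooth hsum hG, ?_,
    fderiv_eq_zero_of_iteratedFDeriv_one_eq_zero (hflat 1 (by norm_num)),
    fderiv_fderiv_eq_zero_of_iteratedFDeriv_two_eq_zero (hflat 2 le_rfl), fun j => ?_⟩
  · simpa [norm_iteratedFDeriv_zero] using congrArg norm (hflat 0 (by norm_num))
  · refine (tsum_eq_single j fun k hk => ?_).trans (scaledBump_self θ _ _ _)
    exact scaledBump_eq_zero θ _ _ (hρ k) (by simpa [θ] using hsep hk.symm)

end FlatInterpolation

section Sequences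

variable {X : Type*} [PseudoMetricSpace X] {x₀ : X}

theorem exists_seq_dist_lt_half {Q : ℕ → X → Prop}
    (h : ∀ k, ∀ δ > 0, ∃ x, 0 < dist x x₀ ∧ dist x x₀ < δ ∧ Q k x) :
    ∃ x : ℕ → X, (∀ k, 0 < dist (x k) x₀ ∧ Q k (x k)) ∧ dist (x 0) x₀ < 1 ∧
      ∀ k, dist (x (k + 1)) x₀ < dist (x k) x₀ / 2 := by
  have h' : ∀ k (δ : ℝ), ∃ x, 0 < δ → 0 < dist x x₀ ∧ dist x x₀ < δ ∧ Q k x := fun k δ =>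
    if hδ : 0 < δ then (h k δ hδ).imp fun _ hx _ => hx else ⟨x₀, fun h => absurd h hδ⟩
  choose s hs using h'
  let x : ℕ → X := fun k => Nat.rec (s 0 1) (fun k xk => s (k + 1) (dist xk x₀ / 2)) k
  have hpos : ∀ k, 0 < dist (x k) x₀ := by
    intro k
    induction k with
    | zero => exact (hs 0 1 one_pos).1
    | succ k ih => exact (hs (k + 1) _ (half_pos ih)).1
  refine ⟨x, fun k => ?_, (hs 0 1 one_pos).2.1, fun k => (hs (k + 1) _ (half_pos (hpos k))).2.1⟩
  cases k with
  | zero => exact ⟨hpos 0, (hs 0 1 one_pos).2.2⟩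
  | succ k => exact ⟨hpos (k + 1), (hs (k + 1) _ (half_pos (hpos k))).2.2⟩

variable {x : ℕ → X} (hx : ∀ k, dist (x (k + 1)) x₀ < dist (x k) x₀ / 2)
include hx

theorem dist_le_half_pow_of_dist_lt_half (k : ℕ) :
    dist (x k) x₀ ≤ dist (x 0) x₀ * (1 / 2) ^ k := by
  induction k with
  | zero => simp
  | succ k ih => rw [pow_succ]; linarith [hx k]

theorem tendsto_of_dist_lt_half : Tendsto x atTop (𝓝 x₀) := by
  rw [tendsto_iff_dist_tendsto_zero]
  refine squeeze_zero (fun _ => dist_nonneg) (dist_le_half_pow_of_dist_lt_half hx) ?_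
  simpa using (tendsto_pow_atTop_nhds_zero_of_lt_one (by norm_num : (0 : ℝ) ≤ 1 / 2)
    (by norm_num)).const_mul (dist (x 0) x₀)

theorem dist_le_half_of_lt {j k : ℕ} (hjk : j < k) : dist (x k) x₀ ≤ dist (x j) x₀ / 2 := by
  induction k, hjk using Nat.le_induction with
  | base => exact (hx j).le
  | succ k _ ih => linarith [hx k, dist_nonneg (x := x (k + 1)) (y := x₀)]

theorem pairwise_half_le_dist_of_dist_lt_half :
    Pairwise fun j k => dist (x k) x₀ / 2 ≤ dist (x j) (x k) := by
  intro j k hjk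
  have h₁ := dist_triangle (x j) (x k) x₀
  have h₂ := dist_triangle (x k) (x j) x₀
  rw [dist_comm (x k) (x j)] at h₂
  rcases hjk.lt_or_gt with h | h
  · linarith [dist_le_half_of_lt hx h, dist_nonneg (x := x k) (y := x₀)]
  · linarith [dist_le_half_of_lt hx h]

end Sequences

theorem not_isLocalMinOn_of_tendsto {X β : Type*} [TopologicalSpace X] [Preorder β] {f : X → β}
    {s : Set X} {a : X} {x : ℕ → X} (hx : Tendsto x atTop (𝓝 a)) (hs : ∀ k, x k ∈ s)
    (hf : ∀ k, f (x k) < f a) : ¬ IsLocalMinOn f s a := fun hmin =>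
  let ⟨k, hk⟩ := ((tendsto_nhdsWithin_iff.2 ⟨hx, .of_forall hs⟩).eventually hmin).exists
  (hf k).not_ge hk

theorem exists_lt_mul_dist_sq_of_not_quadratic_growth {X : Type*} [NormedAddCommGroup X]
    {φ : X → ℝ} {x₀ : X} (hφ : 0 ≤ φ x₀)
    (h : ¬ ∃ β : ℝ, 0 < β ∧ ∃ ε : ℝ, 0 < ε ∧ ∀ x, dist x x₀ < ε → β * ‖x - x₀‖ ^ 2 ≤ φ x)
    {β : ℝ} (hβ : 0 < β) {δ : ℝ} (hδ : 0 < δ) :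
    ∃ x, 0 < dist x x₀ ∧ dist x x₀ < δ ∧ φ x < β * dist x x₀ ^ 2 := by
  push Not at h
  obtain ⟨x, hxδ, hx⟩ := h β hβ δ hδ
  rw [← dist_eq_norm] at hx
  refine ⟨x, dist_pos.2 fun hx₀ => ?_, hxδ, hx⟩
  simp only [hx₀, dist_self] at hx
  linarith

theorem stmt13_general {n m : ℕ}
    (f : Euc n → ℝ) (F : Euc n → Euc m)
    (Ω : Set (Euc m))
    (xb : Euc n) (hfeas : F xb ∈ Ω)
    (hness : ¬ ∃ β : ℝ, 0 < β ∧ ∃ ε : ℝ, 0 < ε ∧ ∀ x : Euc n, dist x xb < ε →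
      β * ‖x - xb‖ ^ 2 ≤ max (f x - f xb) (Metric.infDist (F x) Ω)) :
    ∃ (df : Euc n → ℝ) (dF : Euc n → Euc m),
      ContDiff ℝ 2 df ∧ ContDiff ℝ 2 dF ∧
      df xb = 0 ∧ dF xb = 0 ∧
      fderiv ℝ df xb = 0 ∧ fderiv ℝ dF xb = 0 ∧
      fderiv ℝ (fderiv ℝ df) xb = 0 ∧ fderiv ℝ (fderiv ℝ dF) xb = 0 ∧
      ¬ IsLocalMinOn (fun x => f x + df x) {x | F x + dF x ∈ Ω} xb := by
  obtain ⟨x, hx, hx0, hhalf⟩ := exists_seq_dist_lt_half fun k δ hδ =>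
    (exists_lt_mul_dist_sq_of_not_quadratic_growth (by simp [Metric.infDist_nonneg]) hness
      (pow_pos (one_half_pos (α := ℝ)) k) hδ).imp fun _ hx => ⟨hx.1, hx.2.1, max_lt_iff.1 hx.2.2⟩
  set r := fun k => dist (x k) xb
  choose y hyΩ hy using fun k => (Metric.infDist_lt_iff ⟨_, hfeas⟩).1 (hx k).2.2
  have hρ₁ : ∀ k, r k / 2 ≤ 1 := fun k => by
    have := (dist_le_half_pow_of_dist_lt_half hhalf k).trans
      (mul_le_of_le_one_right dist_nonneg (pow_le_one₀ (by norm_num) (by norm_num)))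
    linarith [hx0, (hx k).1]
  have hx₀ : ∀ k, r k / 2 < dist xb (x k) := fun k => by
    rw [dist_comm]; exact half_lt_self (hx k).1
  have hε : Summable fun k : ℕ => 4 * (1 / 2 : ℝ) ^ k := summable_geometric_two.mul_left 4
  have hsep := pairwise_half_le_dist_of_dist_lt_half hhalf
  obtain ⟨df, hdf, hdf0, hdf1, hdf2, hdfx⟩ := exists_contDiff_flat_interpolation
    (v := fun k => -((1 / 2) ^ k * r k ^ 2)) (fun k => half_pos (hx k).1) hρ₁ hε (fun k => by
      rw [norm_neg, Real.norm_of_nonneg (by positivity)]; exact le_of_eq (by ring)) hsep hx₀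
  obtain ⟨dF, hdF, hdF0, hdF1, hdF2, hdFx⟩ := exists_contDiff_flat_interpolation
    (v := fun k => y k - F (x k)) (fun k => half_pos (hx k).1) hρ₁ hε (fun k => by
      rw [← dist_eq_norm, dist_comm]; linarith [hy k]) hsep hx₀
  refine ⟨df, dF, hdf, hdF, hdf0, hdF0, hdf1, hdF1, hdf2, hdF2,
    not_isLocalMinOn_of_tendsto (tendsto_of_dist_lt_half hhalf) (fun k => ?_) (fun k => ?_)⟩
  · simpa [hdFx] using hyΩ k
  · simp only [hdfx, hdf0]
    linarith [(hx k).2.1]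

/-- Theorem 3.15: a local minimizer that is not an essential local minimizer of
second order can be destroyed by a C² perturbation vanishing to second order
at `x̄`. -/
theorem stmt13 {n m : ℕ}
    (f : Euc n → ℝ) (F : Euc n → Euc m)
    (hf : ContDiff ℝ 1 f) (hF : ContDiff ℝ 1 F)
    (Ω : Set (Euc m)) (hΩ : IsFinUnionPolyhedra Ω)
    (xb : Euc n) (hfeas : F xb ∈ Ω)
    (hmin : IsLocalMinOn f {x | F x ∈ Ω} xb)
    (hness : ¬ ∃ β : ℝ, 0 < β ∧ ∃ ε : ℝ, 0 < ε ∧ ∀ x : Euc n, dist x xb < ε →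
      β * ‖x - xb‖ ^ 2 ≤ max (f x - f xb) (Metric.infDist (F x) Ω)) :
    ∃ (df : Euc n → ℝ) (dF : Euc n → Euc m),
      ContDiff ℝ 2 df ∧ ContDiff ℝ 2 dF ∧
      df xb = 0 ∧ dF xb = 0 ∧
      fderiv ℝ df xb = 0 ∧ fderiv ℝ dF xb = 0 ∧
      fderiv ℝ (fderiv ℝ df) xb = 0 ∧ fderiv ℝ (fderiv ℝ dF) xb = 0 ∧
      ¬ IsLocalMinOn (fun x => f x + df x) {x | F x + dF x ∈ Ω} xb :=
  stmt13_general f F Ω xb hfeas hness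
end
end

section
/- Let x̄ be feasible for the disjunctive program (P) and let u ∈ T_lin(x̄). If the directional linear independence constraint qualification LICQ(u) holds at x̄, then for every splitting F = (F₁,F₂), Ω = Ω₁ × Ω₂ the multiplier set Λ⁰(x̄;u) is empty; in particular, every λ ∈ N(F(x̄);Ω;∇F(x̄)u) with ∇F(x̄)ᵀλ = 0 and λ₁ ≠ 0 cannot exist. -/
noncomputable section

open Filter Topology Set

variable {E : Type*} [NormedAddCommGroup E] [NormedSpace ℝ E]
variable {Y : Type*} [NormedAddCommGroup Y] [NormedSpace ℝ Y]

/-- The pair mapping `F = (F₁,F₂)`. -/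
def PairMap {n m₁ m₂ : ℕ} (F₁ : Euc n → Euc m₁) (F₂ : Euc n → Euc m₂) :
    Euc n → Euc m₁ × Euc m₂ := fun x => (F₁ x, F₂ x)

/-- The multiplier set `Λ^{λ₀}(x̄;u)` for the splitting `F = (F₁,F₂)`,
`Ω = Ω₁ × Ω₂`: multipliers `λ = (λ₁,λ₂)` in the directional limiting normal
cone with vanishing gradient of the generalized Lagrangian and
`λ₀ + ‖λ₁‖ ≠ 0`. -/
def Lam {n m₁ m₂ : ℕ} (f : Euc n → ℝ) (F₁ : Euc n → Euc m₁) (F₂ : Euc n → Euc m₂)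
    (Ω₁ : Set (Euc m₁)) (Ω₂ : Set (Euc m₂)) (xb u : Euc n) (l0 : ℝ) :
    Set ((Euc m₁ × Euc m₂) →L[ℝ] ℝ) :=
  {μ | μ ∈ dlnc (Ω₁ ×ˢ Ω₂) (PairMap F₁ F₂ xb) (fderiv ℝ (PairMap F₁ F₂) xb u) ∧
    l0 • fderiv ℝ f xb + μ.comp (fderiv ℝ (PairMap F₁ F₂) xb) = 0 ∧
    l0 + ‖μ.comp (ContinuousLinearMap.inl ℝ (Euc m₁) (Euc m₂))‖ ≠ 0}

/-- The multiplier set `Λ̂^{λ₀}(x̄;u)`: as `Λ^{λ₀}(x̄;u)` but with the Fréchet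
normal cone to the tangent cone. -/
def LamHat {n m₁ m₂ : ℕ} (f : Euc n → ℝ) (F₁ : Euc n → Euc m₁) (F₂ : Euc n → Euc m₂)
    (Ω₁ : Set (Euc m₁)) (Ω₂ : Set (Euc m₂)) (xb u : Euc n) (l0 : ℝ) :
    Set ((Euc m₁ × Euc m₂) →L[ℝ] ℝ) :=
  {μ | μ ∈ fnc (tcone (Ω₁ ×ˢ Ω₂) (PairMap F₁ F₂ xb)) (fderiv ℝ (PairMap F₁ F₂) xb u) ∧
    l0 • fderiv ℝ f xb + μ.comp (fderiv ℝ (PairMap F₁ F₂) xb) = 0 ∧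
    l0 + ‖μ.comp (ContinuousLinearMap.inl ℝ (Euc m₁) (Euc m₂))‖ ≠ 0}

/-!
A finite union of polyhedra `Ω` coincides near `ȳ = F(x̄)` with `ȳ + T`, `T := T(ȳ;Ω)`, and `T`,
again a finite union of polyhedra, coincides near `d = ∇F(x̄)u` with `d + T(d;T)`. Along the
points `ȳ + tₖwₖ` (`tₖ ↓ 0`, `wₖ → d`) defining a directional normal `λ`, invariance of `T(d;T)`
under the subspace `L` therefore makes every `v ∈ L` a feasible direction of `Ω`, so the Fréchet
normals at these points, and hence `λ`, are nonpositive on `L`; thus `λ` vanishes on `L`. Since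
`λ` also vanishes on the range of `∇F(x̄)` and the two span the whole space, `λ = 0`.
-/

section TangentCone

variable {E : Type*} [NormedAddCommGroup E] [NormedSpace ℝ E]

lemma tcone_smul {Ω : Set E} {x z : E} (hz : z ∈ tcone Ω x) {c : ℝ} (hc : 0 < c) :
    c • z ∈ tcone Ω x := by
  obtain ⟨hx, t, w, ht, ht0, hw, hmem⟩ := hz
  refine ⟨hx, fun k => t k / c, fun k => c • w k, fun k => div_pos (ht k) hc,
    by simpa using ht0.div_const c, hw.const_smul c, fun k => ?_⟩
  rw [smul_smul, div_mul_cancel₀ _ hc.ne']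
  exact hmem k

lemma mem_tcone_of_eventually {Ω : Set E} {x z : E} (hx : x ∈ Ω)
    (h : ∀ᶠ s in 𝓝[>] (0 : ℝ), x + s • z ∈ Ω) : z ∈ tcone Ω x := by
  have hs : Tendsto (fun k : ℕ => 1 / ((k : ℝ) + 1)) atTop (𝓝[>] 0) :=
    tendsto_nhdsWithin_iff.2 ⟨tendsto_one_div_add_atTop_nhds_zero_nat,
      Eventually.of_forall fun k => Set.mem_Ioi.2 (by positivity)⟩
  obtain ⟨N, hN⟩ := eventually_atTop.1 (hs.eventually h)
  exact ⟨hx, fun k => 1 / (((k + N : ℕ) : ℝ) + 1), fun _ => z, fun k => by positivity,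
    tendsto_one_div_add_atTop_nhds_zero_nat.comp (tendsto_add_atTop_nat N), tendsto_const_nhds,
    fun k => hN _ (Nat.le_add_left N k)⟩

lemma tcone_eq_of_eventually_add_mem_iff {Ω K : Set E} {x : E} (hK : IsClosed K)
    (hcone : ∀ c : ℝ, 0 < c → ∀ z ∈ K, c • z ∈ K)
    (hloc : ∀ᶠ z in 𝓝 (0 : E), x + z ∈ Ω ↔ z ∈ K) : tcone Ω x = K := by
  ext z
  constructor
  · rintro ⟨-, t, w, ht, ht0, hw, hmem⟩
    have htw : Tendsto (fun k => t k • w k) atTop (𝓝 0) := by simpa using ht0.smul hw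
    refine hK.mem_of_tendsto hw ?_
    filter_upwards [htw.eventually hloc] with k hk
    simpa [smul_smul, inv_mul_cancel₀ (ht k).ne'] using
      hcone _ (inv_pos.2 (ht k)) _ (hk.1 (hmem k))
  · intro hz
    have h0 : (0 : E) ∈ K := by
      have hlim : Tendsto (fun k : ℕ => (1 / ((k : ℝ) + 1)) • z) atTop (𝓝 0) := by
        simpa using (tendsto_one_div_add_atTop_nhds_zero_nat (𝕜 := ℝ)).smul_const z
      exact hK.mem_of_tendsto hlim (Eventually.of_forall fun k => hcone _ (by positivity) z hz)
    refine mem_tcone_of_eventually (by simpa using hloc.self_of_nhds.2 h0) ?_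
    have hsz : Tendsto (fun s : ℝ => s • z) (𝓝[>] 0) (𝓝 0) := by
      simpa using ((tendsto_id (x := 𝓝 (0 : ℝ))).mono_left nhdsWithin_le_nhds).smul_const z
    filter_upwards [hsz.eventually hloc, self_mem_nhdsWithin] with s hs hs0
    exact hs.2 (hcone s hs0 z hz)

end TangentCone

section Polyhedra

variable {E : Type*} [NormedAddCommGroup E] [NormedSpace ℝ E]
variable {F : Type*} [NormedAddCommGroup F] [NormedSpace ℝ F]

lemma IsPolyhedron.isClosed {P : Set E} (hP : IsPolyhedron P) : IsClosed P := by
  obtain ⟨k, a, b, rfl⟩ := hP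
  simp only [ofPred_forall]
  exact isClosed_iInter fun j => isClosed_le (a j).continuous continuous_const

lemma IsFinUnionPolyhedra.isClosed {Ω : Set E} (hΩ : IsFinUnionPolyhedra Ω) : IsClosed Ω := by
  obtain ⟨p, P, hP, rfl⟩ := hΩ
  exact isClosed_iUnion_of_finite fun i => (hP i).isClosed

lemma isPolyhedron_setOf_and_forall_imp_nonpos {k : ℕ} (p : Prop) (q : Fin k → Prop)
    (a : Fin k → E →L[ℝ] ℝ) : IsPolyhedron {z | p ∧ ∀ j, q j → a j z ≤ 0} := by
  classical
  by_cases hp : p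
  · refine ⟨k, fun j => if q j then a j else 0, 0, ?_⟩
    ext z
    simp only [hp, true_and, mem_ofPred_eq]
    refine forall_congr' fun j => ?_
    by_cases hq : q j <;> simp [hq]
  · exact ⟨1, 0, fun _ => -1, by ext; simp [hp]⟩

lemma IsPolyhedron.prod {P : Set E} {Q : Set F} (hP : IsPolyhedron P) (hQ : IsPolyhedron Q) :
    IsPolyhedron (P ×ˢ Q) := by
  obtain ⟨k₁, a₁, b₁, rfl⟩ := hP
  obtain ⟨k₂, a₂, b₂, rfl⟩ := hQ
  refine ⟨k₁ + k₂, Fin.append (fun j => (a₁ j).comp (ContinuousLinearMap.fst ℝ E F))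
    (fun j => (a₂ j).comp (ContinuousLinearMap.snd ℝ E F)), Fin.append b₁ b₂, ?_⟩
  ext ⟨y, z⟩
  simp [Fin.forall_fin_add]

lemma IsFinUnionPolyhedra.prod {Ω₁ : Set E} {Ω₂ : Set F}
    (h₁ : IsFinUnionPolyhedra Ω₁) (h₂ : IsFinUnionPolyhedra Ω₂) :
    IsFinUnionPolyhedra (Ω₁ ×ˢ Ω₂) := by
  obtain ⟨p₁, P₁, hP₁, rfl⟩ := h₁
  obtain ⟨p₂, P₂, hP₂, rfl⟩ := h₂
  refine ⟨p₁ * p₂, fun i => P₁ (finProdFinEquiv.symm i).1 ×ˢ P₂ (finProdFinEquiv.symm i).2,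
    fun i => (hP₁ _).prod (hP₂ _), ?_⟩
  rw [← iUnion_prod, ← finProdFinEquiv.symm.surjective.iUnion_comp]

lemma eventually_add_le_iff (ℓ : E →L[ℝ] ℝ) (α β : ℝ) :
    ∀ᶠ z in 𝓝 (0 : E), α + ℓ z ≤ β ↔ α ≤ β ∧ (α = β → ℓ z ≤ 0) := by
  have hℓ : Tendsto ℓ (𝓝 0) (𝓝 0) := by simpa using ℓ.continuous.tendsto 0
  rcases lt_trichotomy α β with h | rfl | h
  · filter_upwards [hℓ.eventually (gt_mem_nhds (sub_pos.2 h))] with z hz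
    simp only [h.le, h.ne, true_and, false_imp_iff, iff_true]
    linarith
  · simp
  · filter_upwards [hℓ.eventually (lt_mem_nhds (sub_neg.2 h))] with z hz
    simp only [h.not_ge, false_and, iff_false, not_le]
    linarith

lemma IsFinUnionPolyhedra.exists_eventually_add_mem_iff {Ω : Set E}
    (hΩ : IsFinUnionPolyhedra Ω) (x : E) :
    ∃ K : Set E, IsFinUnionPolyhedra K ∧ (∀ c : ℝ, 0 < c → ∀ z ∈ K, c • z ∈ K) ∧
      ∀ᶠ z in 𝓝 0, x + z ∈ Ω ↔ z ∈ K := by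
  obtain ⟨p, P, hP, rfl⟩ := hΩ
  choose k a b hab using hP
  refine ⟨⋃ i, {z | (∀ j, a i j x ≤ b i j) ∧ ∀ j, a i j x = b i j → a i j z ≤ 0},
    ⟨p, _, fun i => isPolyhedron_setOf_and_forall_imp_nonpos _ _ (a i), rfl⟩, ?_, ?_⟩
  · simp only [mem_iUnion, mem_ofPred_eq, map_smul, smul_eq_mul]
    rintro c hc z ⟨i, hx, hz⟩
    exact ⟨i, hx, fun j hj => mul_nonpos_of_nonneg_of_nonpos hc.le (hz j hj)⟩
  · filter_upwards [eventually_all.2 fun i => eventually_all.2 fun j =>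
      eventually_add_le_iff (a i j) (a i j x) (b i j)] with z hz
    simp only [mem_iUnion, hab, mem_ofPred_eq, map_add, hz, forall_and]

protected lemma IsFinUnionPolyhedra.tcone {Ω : Set E} (hΩ : IsFinUnionPolyhedra Ω) (x : E) :
    IsFinUnionPolyhedra (tcone Ω x) := by
  obtain ⟨K, hK, hcone, hloc⟩ := hΩ.exists_eventually_add_mem_iff x
  rwa [tcone_eq_of_eventually_add_mem_iff hK.isClosed hcone hloc]

lemma IsFinUnionPolyhedra.eventually_add_mem_iff {Ω : Set E} (hΩ : IsFinUnionPolyhedra Ω)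
    (x : E) : ∀ᶠ z in 𝓝 0, x + z ∈ Ω ↔ z ∈ tcone Ω x := by
  obtain ⟨K, hK, hcone, hloc⟩ := hΩ.exists_eventually_add_mem_iff x
  rwa [tcone_eq_of_eventually_add_mem_iff hK.isClosed hcone hloc]

end Polyhedra

section Multipliers

variable {E : Type*} [NormedAddCommGroup E] [NormedSpace ℝ E]

lemma fnc_apply_nonpos {Ω : Set E} {x v : E} {ξ : E →L[ℝ] ℝ} (hξ : ξ ∈ fnc Ω x)
    (hv : ∀ᶠ s in 𝓝[>] (0 : ℝ), x + s • v ∈ Ω) : ξ v ≤ 0 := by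
  have hsv : Tendsto (fun s : ℝ => s • v) (𝓝[>] 0) (𝓝 0) := by
    simpa using ((tendsto_id (x := 𝓝 (0 : ℝ))).mono_left nhdsWithin_le_nhds).smul_const v
  have hε : ∀ ε : ℝ, 0 < ε → ξ v ≤ ε * ‖v‖ := by
    intro ε hε
    obtain ⟨δ, hδ, hδξ⟩ := hξ.2 ε hε
    obtain ⟨s, hs, hsδ, hs0⟩ :=
      (hv.and ((hsv.eventually (Metric.ball_mem_nhds 0 hδ)).and self_mem_nhdsWithin)).exists
    have hs0 : (0 : ℝ) < s := hs0
    have := hδξ _ hs (by simpa using hsδ)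
    rw [add_sub_cancel_left, map_smul, smul_eq_mul, norm_smul, Real.norm_of_nonneg hs0.le,
      ← mul_left_comm] at this
    exact le_of_mul_le_mul_left this hs0
  have hlim : Tendsto (fun ε : ℝ => ε * ‖v‖) (𝓝[>] 0) (𝓝 0) := by
    simpa using ((tendsto_id (x := 𝓝 (0 : ℝ))).mono_left nhdsWithin_le_nhds).mul_const ‖v‖
  exact ge_of_tendsto hlim (eventually_nhdsWithin_of_forall hε)

lemma eventually_eventually_add_smul_mem {T : Set E} {d v : E}
    (hT : ∀ᶠ z in 𝓝 0, d + z ∈ T ↔ z ∈ tcone T d)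
    (hv : ∀ z ∈ tcone T d, ∀ σ : ℝ, z + σ • v ∈ tcone T d) :
    ∀ᶠ w in 𝓝 d, ∀ᶠ σ in 𝓝 (0 : ℝ), w ∈ T → w + σ • v ∈ T := by
  have h₁ : Tendsto (fun p : E × ℝ => p.1 - d) (𝓝 (d, 0)) (𝓝 0) :=
    Continuous.tendsto' (by fun_prop) _ _ (sub_self d)
  have h₂ : Tendsto (fun p : E × ℝ => p.1 - d + p.2 • v) (𝓝 (d, 0)) (𝓝 0) :=
    Continuous.tendsto' (by fun_prop) _ _ (by simp)
  have h := (h₁.eventually hT).and (h₂.eventually hT)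
  rw [nhds_prod_eq] at h
  filter_upwards [h.curry] with w hw
  filter_upwards [hw] with σ ⟨hσ₁, hσ₂⟩ hwT
  have := hσ₂.2 (hv _ (hσ₁.1 (by simpa using hwT)) σ)
  rwa [← add_assoc, add_sub_cancel] at this

lemma dlnc_apply_nonpos {Ω : Set E} {x d v : E} {μ : E →L[ℝ] ℝ}
    (hΩ : ∀ᶠ z in 𝓝 0, x + z ∈ Ω ↔ z ∈ tcone Ω x)
    (hT : ∀ᶠ z in 𝓝 0, d + z ∈ tcone Ω x ↔ z ∈ tcone (tcone Ω x) d)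
    (hv : ∀ z ∈ tcone (tcone Ω x) d, ∀ σ : ℝ, z + σ • v ∈ tcone (tcone Ω x) d)
    (hμ : μ ∈ dlnc Ω x d) : μ v ≤ 0 := by
  obtain ⟨-, t, w, ξ, ht, ht0, hw, hξ, hfnc⟩ := hμ
  have htw : Tendsto (fun k => t k • w k) atTop (𝓝 0) := by simpa using ht0.smul hw
  refine le_of_tendsto (((ContinuousLinearMap.apply ℝ ℝ v).continuous.tendsto μ).comp hξ) ?_
  filter_upwards [htw.eventually hΩ.eventually_nhds,
    hw.eventually (eventually_eventually_add_smul_mem hT hv)] with k hΩk hTk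
  show ξ k v ≤ 0
  refine fnc_apply_nonpos (hfnc k) ?_
  have hwT : w k ∈ tcone Ω x := by
    simpa [smul_smul, inv_mul_cancel₀ (ht k).ne'] using
      tcone_smul (hΩk.self_of_nhds.1 (hfnc k).1) (inv_pos.2 (ht k))
  -- the step `s • v` from `x + t k • w k` is the step `(s / t k) • v` from `w k` in the cone
  have h₁ : Tendsto (fun s : ℝ => t k • w k + s • v) (𝓝[>] 0) (𝓝 (t k • w k)) :=
    (Continuous.tendsto' (by fun_prop) _ _ (by simp)).mono_left nhdsWithin_le_nhds
  have h₂ : Tendsto (fun s : ℝ => s / t k) (𝓝[>] 0) (𝓝 0) :=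
    (Continuous.tendsto' (by fun_prop) _ _ (by simp)).mono_left nhdsWithin_le_nhds
  filter_upwards [h₁.eventually hΩk, h₂.eventually hTk] with s hs₁ hs₂
  have := tcone_smul (hs₂ hwT) (ht k)
  rw [smul_add, smul_smul, mul_div_cancel₀ _ (ht k).ne'] at this
  rw [add_assoc]
  exact hs₁.2 this

lemma dlnc_apply_eq_zero_of_mem {Ω : Set E} {x d : E} {μ : E →L[ℝ] ℝ} {L : Submodule ℝ E}
    (hΩ : ∀ᶠ z in 𝓝 0, x + z ∈ Ω ↔ z ∈ tcone Ω x)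
    (hT : ∀ᶠ z in 𝓝 0, d + z ∈ tcone Ω x ↔ z ∈ tcone (tcone Ω x) d)
    (hL : ∀ z ∈ tcone (tcone Ω x) d, ∀ w ∈ L, z + w ∈ tcone (tcone Ω x) d)
    (hμ : μ ∈ dlnc Ω x d) {v : E} (hv : v ∈ L) : μ v = 0 := by
  have key : ∀ y ∈ L, μ y ≤ 0 := fun y hy =>
    dlnc_apply_nonpos hΩ hT (fun z hz σ => hL z hz _ (L.smul_mem σ hy)) hμ
  linarith [key v hv, map_neg μ v ▸ key (-v) (L.neg_mem hv)]

end Multipliers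

lemma ContinuousLinearMap.eq_zero_of_range_sup_eq_top {E F : Type*}
    [NormedAddCommGroup E] [NormedSpace ℝ E] [NormedAddCommGroup F] [NormedSpace ℝ F]
    {A : E →L[ℝ] F} {L : Submodule ℝ F} (hAL : LinearMap.range A.toLinearMap ⊔ L = ⊤)
    {μ : F →L[ℝ] ℝ} (hμA : μ.comp A = 0) (hμL : ∀ v ∈ L, μ v = 0) : μ = 0 := by
  suffices h : LinearMap.range A.toLinearMap ⊔ L ≤ LinearMap.ker μ.toLinearMap by
    rw [hAL, top_le_iff, LinearMap.ker_eq_top] at h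
    exact ContinuousLinearMap.coe_injective h
  refine sup_le (LinearMap.range_le_ker_iff.2 ?_) hμL
  exact congrArg ContinuousLinearMap.toLinearMap hμA

theorem stmt16_general {n m₁ m₂ : ℕ}
    (F₁ : Euc n → Euc m₁) (F₂ : Euc n → Euc m₂)
    (Ω₁ : Set (Euc m₁)) (Ω₂ : Set (Euc m₂))
    (hΩ₁ : IsFinUnionPolyhedra Ω₁) (hΩ₂ : IsFinUnionPolyhedra Ω₂)
    (xb : Euc n)
    (u : Euc n)
    (hLICQ : ∃ L : Submodule ℝ (Euc m₁ × Euc m₂),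
      (∀ z ∈ tcone (tcone (Ω₁ ×ˢ Ω₂) (PairMap F₁ F₂ xb))
          (fderiv ℝ (PairMap F₁ F₂) xb u), ∀ w ∈ L,
        z + w ∈ tcone (tcone (Ω₁ ×ˢ Ω₂) (PairMap F₁ F₂ xb))
          (fderiv ℝ (PairMap F₁ F₂) xb u)) ∧
      LinearMap.range (fderiv ℝ (PairMap F₁ F₂) xb).toLinearMap ⊔ L = ⊤) :
    {μ : (Euc m₁ × Euc m₂) →L[ℝ] ℝ |
      μ ∈ dlnc (Ω₁ ×ˢ Ω₂) (PairMap F₁ F₂ xb) (fderiv ℝ (PairMap F₁ F₂) xb u) ∧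
      μ.comp (fderiv ℝ (PairMap F₁ F₂) xb) = 0 ∧
      μ.comp (ContinuousLinearMap.inl ℝ (Euc m₁) (Euc m₂)) ≠ 0} = ∅ := by
  obtain ⟨L, hL, hrange⟩ := hLICQ
  have hΩ := hΩ₁.prod hΩ₂
  refine eq_empty_of_forall_notMem fun μ ⟨hμ, hμA, hμ₁⟩ => hμ₁ ?_
  have hμL : ∀ v ∈ L, μ v = 0 := fun v =>
    dlnc_apply_eq_zero_of_mem (hΩ.eventually_add_mem_iff _)
      ((hΩ.tcone _).eventually_add_mem_iff _) hL hμ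
  rw [ContinuousLinearMap.eq_zero_of_range_sup_eq_top hrange hμA hμL,
    ContinuousLinearMap.zero_comp]

/-- Lemma 3.18: under LICQ(u) the multiplier set `Λ⁰(x̄;u)` is empty for any
splitting of the constraints. -/
theorem stmt16 {n m₁ m₂ : ℕ}
    (F₁ : Euc n → Euc m₁) (F₂ : Euc n → Euc m₂)
    (hF₁ : ContDiff ℝ 1 F₁) (hF₂ : ContDiff ℝ 1 F₂)
    (Ω₁ : Set (Euc m₁)) (Ω₂ : Set (Euc m₂))
    (hΩ₁ : IsFinUnionPolyhedra Ω₁) (hΩ₂ : IsFinUnionPolyhedra Ω₂)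
    (xb : Euc n) (hx₁ : F₁ xb ∈ Ω₁) (hx₂ : F₂ xb ∈ Ω₂)
    (u : Euc n)
    (hu : fderiv ℝ (PairMap F₁ F₂) xb u ∈ tcone (Ω₁ ×ˢ Ω₂) (PairMap F₁ F₂ xb))
    (hLICQ : ∃ L : Submodule ℝ (Euc m₁ × Euc m₂),
      (∀ z ∈ tcone (tcone (Ω₁ ×ˢ Ω₂) (PairMap F₁ F₂ xb))
          (fderiv ℝ (PairMap F₁ F₂) xb u), ∀ w ∈ L,
        z + w ∈ tcone (tcone (Ω₁ ×ˢ Ω₂) (PairMap F₁ F₂ xb))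
          (fderiv ℝ (PairMap F₁ F₂) xb u)) ∧
      LinearMap.range (fderiv ℝ (PairMap F₁ F₂) xb).toLinearMap ⊔ L = ⊤) :
    {μ : (Euc m₁ × Euc m₂) →L[ℝ] ℝ |
      μ ∈ dlnc (Ω₁ ×ˢ Ω₂) (PairMap F₁ F₂ xb) (fderiv ℝ (PairMap F₁ F₂) xb u) ∧
      μ.comp (fderiv ℝ (PairMap F₁ F₂) xb) = 0 ∧
      μ.comp (ContinuousLinearMap.inl ℝ (Euc m₁) (Euc m₂)) ≠ 0} = ∅ :=
  stmt16_general F₁ F₂ Ω₁ Ω₂ hΩ₁ hΩ₂ xb u hLICQ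
end
end
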